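/- arXiv:1902.05754 — 3 statements merged into one kernel-verified Lean document; each statement's English description precedes it below -/
import Mathlib

section
/- Let d ≥ 1 be an integer and L ≥ 0. Then lim_{ρ → 0⁺} (1 − D_{−d}(Lρ)/D_{−d}(−Lρ)) / ρ = 2√2 · Γ((d+1)/2) / Γ(d/2) · L. Consequently, for f L-Lipschitz the total variation bound of the Lipschitz case satisfies ‖π_ρ − π‖_TV ≤ ρ L · 2√2 Γ((d+1)/2)/Γ(d/2) + o(ρ) as ρ → 0⁺. -/
open MeasureTheory

noncomputable section

/-- ℝ^d with the Euclidean (ℓ²) structure. -/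
abbrev En (d : ℕ) := EuclideanSpace ℝ (Fin d)

/-- The parabolic cylinder function
`D_{−d}(z) = (exp(−z²/4)/Γ(d)) ∫₀^∞ exp(−xz − x²/2) x^{d−1} dx`. -/
noncomputable def pcf (d : ℕ) (z : ℝ) : ℝ :=
  (Real.exp (-z ^ 2 / 4) / Real.Gamma d) *
    ∫ x in Set.Ioi (0 : ℝ), Real.exp (-(x * z) - x ^ 2 / 2) * x ^ (d - 1)

/-- The normalized density `π(θ) = exp(−f(θ))/C_π`. -/
noncomputable def nrmDensity {d : ℕ} (f : En d → ℝ) (θ : En d) : ℝ :=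
  Real.exp (-f θ) / ∫ θ' : En d, Real.exp (-f θ')

/-- The normalized Gaussian-smoothed density
`π_ρ(θ) = (1/C_{π_ρ}) ∫ exp(−f(z) − ‖z−θ‖²/(2ρ²)) dz`. -/
noncomputable def gaussSmoothed {d : ℕ} (f : En d → ℝ) (ρ : ℝ) (θ : En d) : ℝ :=
  (∫ z : En d, Real.exp (-f z - ‖z - θ‖ ^ 2 / (2 * ρ ^ 2))) /
    ∫ θ' : En d, ∫ z : En d, Real.exp (-f z - ‖z - θ'‖ ^ 2 / (2 * ρ ^ 2))

open Filter Asymptotics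

/-!
Because the prefactor `exp(-z²/4)/Γ(d)` of `pcf d z` is even in `z`, the ratio
`D_{-d}(Lρ)/D_{-d}(-Lρ)` equals `J(Lρ)/J(-Lρ)` with `J = gaussLaplace (d-1)`. Differentiating
under the integral gives `J' = -gaussLaplace d`, so `F(ρ) = 1 - J(Lρ)/J(-Lρ)` vanishes at `0`
with derivative `2L · gaussLaplace d 0 / gaussLaplace (d-1) 0`, a ratio of half-Gaussian moments
equal to `2√2 Γ((d+1)/2)/Γ(d/2) · L`. The limit and the `o(ρ)` remainder both express
`HasDerivAt F _ 0`.

For the bound, the Lipschitz condition sandwiches the unnormalized smoothing of `exp(-f)` at `θ`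
between `exp(-f θ) K(-L)` and `exp(-f θ) K(L)`, where `K(c) = ∫ exp(c‖z‖ - ‖z‖²/(2ρ²)) dz`.
Hence `π_ρ ≥ (K(-L)/K(L)) π`, which bounds the total variation by `1 - K(-L)/K(L)`, and polar
coordinates give `K(c) ∝ J(-cρ)`.
-/

open Real Set

def gaussLaplace (n : ℕ) (s : ℝ) : ℝ :=
  ∫ x in Ioi 0, exp (-(x * s) - x ^ 2 / 2) * x ^ n

lemma integrableOn_pow_mul_exp_sub_mul_sq (n : ℕ) (c : ℝ) {b : ℝ} (hb : 0 < b) :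
    IntegrableOn (fun x : ℝ => x ^ n * exp (c * x - b * x ^ 2)) (Ioi 0) := by
  have hdom : IntegrableOn
      (fun x : ℝ => exp (c ^ 2 / (2 * b)) * (x ^ (n : ℝ) * exp (-(b / 2) * x ^ 2))) (Ioi 0) :=
    (integrableOn_rpow_mul_exp_neg_mul_sq (by positivity)
      (by linarith [n.cast_nonneg (α := ℝ)])).const_mul _
  refine hdom.mono' (by fun_prop) ?_
  filter_upwards [ae_restrict_mem measurableSet_Ioi] with x (hx : 0 < x)
  have hquad : c * x - b * x ^ 2 ≤ c ^ 2 / (2 * b) + -(b / 2) * x ^ 2 := by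
    have : 0 ≤ (c - b * x) ^ 2 / (2 * b) := by positivity
    have h : (c - b * x) ^ 2 / (2 * b) = c ^ 2 / (2 * b) - c * x + b / 2 * x ^ 2 := by
      field_simp; ring
    linarith
  rw [norm_mul, norm_of_nonneg (by positivity), norm_of_nonneg (exp_pos _).le, rpow_natCast,
    mul_left_comm, ← exp_add]
  gcongr

lemma integrableOn_gaussLaplace (n : ℕ) (s : ℝ) :
    IntegrableOn (fun x : ℝ => exp (-(x * s) - x ^ 2 / 2) * x ^ n) (Ioi 0) :=
  (integrableOn_pow_mul_exp_sub_mul_sq n (-s) one_half_pos).congr_fun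
    (fun x _ => by ring_nf) measurableSet_Ioi

lemma gaussLaplace_pos (n : ℕ) (s : ℝ) : 0 < gaussLaplace n s := by
  have hpos : ∀ x ∈ Ioi (0 : ℝ), 0 < exp (-(x * s) - x ^ 2 / 2) * x ^ n :=
    fun x (hx : 0 < x) => by positivity
  rw [gaussLaplace, setIntegral_pos_iff_support_of_nonneg_ae
    ((ae_restrict_mem measurableSet_Ioi).mono fun x hx => (hpos x hx).le)
    (integrableOn_gaussLaplace n s)]
  calc (0 : ENNReal) < volume (Ioi (0 : ℝ)) := by simp
    _ ≤ _ := measure_mono fun x hx => by exact ⟨(hpos x hx).ne', hx⟩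

lemma hasDerivAt_gaussLaplace (n : ℕ) (s : ℝ) :
    HasDerivAt (gaussLaplace n) (-gaussLaplace (n + 1) s) s := by
  have hderiv : ∀ x t : ℝ, HasDerivAt (fun t => exp (-(x * t) - x ^ 2 / 2) * x ^ n)
      (-(exp (-(x * t) - x ^ 2 / 2) * x ^ (n + 1))) t := fun x t => by
    refine ((((hasDerivAt_id t).const_mul x).neg.sub_const (x ^ 2 / 2)).exp.mul_const
      (x ^ n)).congr_deriv ?_
    simp only [id, Pi.neg_apply, pow_succ]; ring
  have hmain := hasDerivAt_integral_of_dominated_loc_of_deriv_le (μ := volume.restrict (Ioi 0))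
    (F := fun t x => exp (-(x * t) - x ^ 2 / 2) * x ^ n)
    (bound := fun x => x ^ (n + 1) * exp ((|s| + 1) * x - 1 / 2 * x ^ 2))
    (Metric.ball_mem_nhds s one_pos) (.of_forall fun t => by fun_prop)
    (integrableOn_gaussLaplace n s) (by fun_prop) ?_
    (integrableOn_pow_mul_exp_sub_mul_sq _ _ one_half_pos)
    (.of_forall fun x t _ => hderiv x t)
  · rw [gaussLaplace, ← integral_neg]
    exact hmain.2
  filter_upwards [ae_restrict_mem measurableSet_Ioi] with x (hx : 0 < x) t ht
  have ht' : -t ≤ |s| + 1 := by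
    have := Metric.mem_ball.1 ht
    rw [Real.dist_eq] at this
    linarith [neg_abs_le s, abs_lt.1 this]
  rw [norm_neg, norm_of_nonneg (by positivity), mul_comm]
  gcongr
  · nlinarith
  · linarith

lemma gaussLaplace_zero (n : ℕ) :
    gaussLaplace n 0 = 2 ^ (((n : ℝ) - 1) / 2) * Gamma (((n : ℝ) + 1) / 2) := by
  have hmoment := integral_rpow_mul_exp_neg_mul_rpow (p := 2) (q := n) (b := 1 / 2) two_pos
    (by linarith [n.cast_nonneg (α := ℝ)]) one_half_pos
  have hpow : (1 / 2 : ℝ) ^ (-((n : ℝ) + 1) / 2) * (1 / 2) = 2 ^ (((n : ℝ) - 1) / 2) := by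
    rw [one_div, inv_rpow zero_le_two, ← rpow_neg zero_le_two, ← rpow_neg_one 2,
      ← rpow_add two_pos]
    ring_nf
  rw [← hpow, ← hmoment, gaussLaplace]
  refine setIntegral_congr_fun measurableSet_Ioi fun x _ => ?_
  simp only [mul_zero, neg_zero, zero_sub, rpow_natCast, rpow_two]
  ring_nf

lemma gaussLaplace_zero_div (d : ℕ) (hd : 1 ≤ d) :
    gaussLaplace d 0 / gaussLaplace (d - 1) 0
      = √2 * Gamma (((d : ℝ) + 1) / 2) / Gamma ((d : ℝ) / 2) := by
  have hcast : (((d - 1 : ℕ) : ℝ) + 1) / 2 = (d : ℝ) / 2 := by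
    rw [Nat.cast_sub hd]; ring
  have hpow : (2 : ℝ) ^ (((d : ℝ) - 1) / 2) = √2 * 2 ^ ((((d - 1 : ℕ) : ℝ) - 1) / 2) := by
    rw [sqrt_eq_rpow, ← rpow_add two_pos, Nat.cast_sub hd]
    ring_nf
  have hΓ : 0 < Gamma ((d : ℝ) / 2) := Gamma_pos_of_pos (by positivity)
  rw [gaussLaplace_zero, gaussLaplace_zero, hcast, hpow]
  field_simp

lemma hasDerivAt_one_sub_gaussLaplace_div (n : ℕ) (L : ℝ) :
    HasDerivAt (fun ρ => 1 - gaussLaplace n (L * ρ) / gaussLaplace n (-(L * ρ)))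
      (2 * L * (gaussLaplace (n + 1) 0 / gaussLaplace n 0)) 0 := by
  have hlin : ∀ c : ℝ, HasDerivAt (fun ρ => gaussLaplace n (c * ρ))
      (c * -gaussLaplace (n + 1) 0) 0 := fun c => by
    refine ((hasDerivAt_gaussLaplace n (c * 0)).comp 0
      ((hasDerivAt_id 0).const_mul c)).congr_deriv ?_
    rw [mul_zero, mul_one, mul_comm]
  have hneg : HasDerivAt (fun ρ => gaussLaplace n (-(L * ρ))) (-L * -gaussLaplace (n + 1) 0) 0 :=
    by simpa only [neg_mul] using hlin (-L)
  have hquot := (hlin L).div hneg (gaussLaplace_pos n _).ne'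
  refine (hquot.const_sub 1).congr_deriv ?_
  have hJ0 := (gaussLaplace_pos n 0).ne'
  simp only [mul_zero, neg_zero]
  field_simp
  ring

lemma pcf_pos {d : ℕ} (hd : 1 ≤ d) (z : ℝ) : 0 < pcf d z :=
  mul_pos (div_pos (exp_pos _) (Gamma_pos_of_pos (by positivity))) (gaussLaplace_pos _ _)

lemma pcf_div_pcf_neg {d : ℕ} (hd : 1 ≤ d) (z : ℝ) :
    pcf d z / pcf d (-z) = gaussLaplace (d - 1) z / gaussLaplace (d - 1) (-z) := by
  have hΓ : 0 < Gamma d := Gamma_pos_of_pos (by positivity)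
  simp only [pcf, neg_sq]
  exact mul_div_mul_left _ _ (by positivity)

lemma hasDerivAt_one_sub_pcf_div {d : ℕ} (hd : 1 ≤ d) (L : ℝ) :
    HasDerivAt (fun ρ => 1 - pcf d (L * ρ) / pcf d (-(L * ρ)))
      (2 * √2 * Gamma (((d : ℝ) + 1) / 2) / Gamma ((d : ℝ) / 2) * L) 0 := by
  have h := hasDerivAt_one_sub_gaussLaplace_div (d - 1) L
  rw [Nat.sub_add_cancel hd, gaussLaplace_zero_div d hd] at h
  simp only [pcf_div_pcf_neg hd]
  exact h.congr_deriv (by ring)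

section TotalVariation

variable {α : Type*} [MeasurableSpace α] {μ : Measure α}

lemma half_integral_abs_sub_le_of_mul_le {p q : α → ℝ} {c : ℝ} (hp : Integrable p μ)
    (hq : Integrable q μ) (hp0 : 0 ≤ᵐ[μ] p) (hp1 : ∫ x, p x ∂μ = 1) (hq1 : ∫ x, q x ∂μ = 1)
    (hcpq : ∀ᵐ x ∂μ, c * p x ≤ q x) :
    1 / 2 * ∫ x, |q x - p x| ∂μ ≤ 1 - c := by
  have hc : c ≤ 1 := by
    simpa [integral_const_mul, hp1, hq1] using integral_mono_ae (hp.const_mul c) hq hcpq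
  have hpos : ∫ x, (p x - q x)⁺ ∂μ ≤ ∫ x, (1 - c) * p x ∂μ := by
    refine integral_mono_ae (hp.sub hq).pos_part (hp.const_mul _) ?_
    filter_upwards [hp0, hcpq] with x hx hcx
    exact max_le (by linarith) (mul_nonneg (sub_nonneg.2 hc) hx)
  simp_rw [abs_sub_comm (q _)]
  rw [integral_abs_eq_two_mul_integral_posPart_sub_integral (f := fun x => p x - q x) (hp.sub hq),
    integral_sub hp hq, hp1, hq1]
  rw [integral_const_mul, hp1] at hpos
  linarith

lemma half_integral_abs_div_integral_sub_le {u v : α → ℝ} {a b : ℝ} (hu : Integrable u μ)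
    (hv : Integrable v μ) (hu0 : 0 ≤ᵐ[μ] u) (hu_pos : 0 < ∫ x, u x ∂μ) (ha : 0 < a)
    (hlo : ∀ᵐ x ∂μ, u x * a ≤ v x) (hhi : ∀ᵐ x ∂μ, v x ≤ u x * b) :
    1 / 2 * ∫ x, |v x / ∫ y, v y ∂μ - u x / ∫ y, u y ∂μ| ∂μ ≤ 1 - a / b := by
  set U := ∫ y, u y ∂μ
  set V := ∫ y, v y ∂μ
  have hV_lo : U * a ≤ V := by
    simpa only [integral_mul_const] using integral_mono_ae (hu.mul_const a) hv hlo
  have hV_hi : V ≤ U * b := by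
    simpa only [integral_mul_const] using integral_mono_ae hv (hu.mul_const b) hhi
  have hV : 0 < V := (mul_pos hu_pos ha).trans_le hV_lo
  have hb : 0 < b := pos_of_mul_pos_right (hV.trans_le hV_hi) hu_pos.le
  refine half_integral_abs_sub_le_of_mul_le (hu.div_const U) (hv.div_const V)
    (hu0.mono fun x hx => div_nonneg hx hu_pos.le) (by rw [integral_div, div_self hu_pos.ne'])
    (by rw [integral_div, div_self hV.ne']) ?_
  filter_upwards [hu0, hlo] with x hx hax
  rw [div_mul_div_comm, div_le_div_iff₀ (mul_pos hb hu_pos) hV]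
  convert mul_le_mul hax hV_hi hV.le ((mul_nonneg hx ha.le).trans hax) using 1 <;> ring

end TotalVariation

def gaussSmoothingIntegral {E : Type*} [NormedAddCommGroup E] [MeasurableSpace E]
    (μ : Measure E) (f : E → ℝ) (ρ : ℝ) (θ : E) : ℝ :=
  ∫ z, exp (-f z - ‖z - θ‖ ^ 2 / (2 * ρ ^ 2)) ∂μ

lemma exp_neg_mul_exp_neg_sub_le {x y t : ℝ} (h : |x - y| ≤ t) (g : ℝ) :
    exp (-y) * exp (-t - g) ≤ exp (-x - g) := by
  rw [← exp_add]
  gcongr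
  linarith [(abs_le.1 h).2]

lemma exp_neg_sub_le_exp_neg_mul {x y t : ℝ} (h : |x - y| ≤ t) (g : ℝ) :
    exp (-x - g) ≤ exp (-y) * exp (t - g) := by
  rw [← exp_add]
  gcongr
  linarith [(abs_le.1 h).1]

lemma continuous_of_abs_sub_le_mul_norm {E : Type*} [SeminormedAddCommGroup E] {f : E → ℝ}
    {L : ℝ} (hf : ∀ θ η, |f θ - f η| ≤ L * ‖θ - η‖) : Continuous f :=
  (LipschitzWith.of_dist_le' fun θ η => by
    simpa only [dist_eq_norm, Real.norm_eq_abs] using hf θ η).continuous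

section GaussSmoothing

variable {E : Type*} [NormedAddCommGroup E] [NormedSpace ℝ E] [FiniteDimensional ℝ E]
  [Nontrivial E] [MeasurableSpace E] [BorelSpace E] (μ : Measure E) [μ.IsAddHaarMeasure]

lemma integrable_exp_mul_norm_sub_sq_norm {ρ : ℝ} (hρ : ρ ≠ 0) (c : ℝ) :
    Integrable (fun z => exp (c * ‖z‖ - ‖z‖ ^ 2 / (2 * ρ ^ 2))) μ := by
  rw [integrable_fun_norm_addHaar μ (f := fun r => exp (c * r - r ^ 2 / (2 * ρ ^ 2)))]
  refine (integrableOn_pow_mul_exp_sub_mul_sq (Module.finrank ℝ E - 1) c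
    (b := 1 / (2 * ρ ^ 2)) (by positivity)).congr_fun (fun r _ => ?_) measurableSet_Ioi
  simp only [smul_eq_mul]
  ring_nf

lemma integral_exp_mul_norm_sub_sq_norm {ρ : ℝ} (hρ : 0 < ρ) (c : ℝ) :
    ∫ z, exp (c * ‖z‖ - ‖z‖ ^ 2 / (2 * ρ ^ 2)) ∂μ
      = Module.finrank ℝ E * μ.real (Metric.ball 0 1) * ρ ^ Module.finrank ℝ E
        * gaussLaplace (Module.finrank ℝ E - 1) (-(c * ρ)) := by
  have hn : 1 ≤ Module.finrank ℝ E := Module.finrank_pos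
  have hscale := integral_comp_mul_left_Ioi'
    (fun r => r ^ (Module.finrank ℝ E - 1) * exp (c * r - r ^ 2 / (2 * ρ ^ 2))) 0 hρ
  have hradial : ∫ r in Ioi (0 : ℝ),
      r ^ (Module.finrank ℝ E - 1) * exp (c * r - r ^ 2 / (2 * ρ ^ 2))
      = ρ ^ Module.finrank ℝ E * gaussLaplace (Module.finrank ℝ E - 1) (-(c * ρ)) := by
    rw [mul_zero] at hscale
    rw [← hscale, gaussLaplace, smul_eq_mul, ← integral_const_mul, ← integral_const_mul]
    refine setIntegral_congr_fun measurableSet_Ioi fun x _ => ?_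
    rw [show ρ ^ Module.finrank ℝ E = ρ * ρ ^ (Module.finrank ℝ E - 1) by
      rw [← pow_succ', Nat.sub_add_cancel hn]]
    field_simp
    ring_nf
  rw [integral_fun_norm_addHaar μ (fun r => exp (c * r - r ^ 2 / (2 * ρ ^ 2)))]
  simp only [smul_eq_mul, nsmul_eq_mul]
  rw [hradial]
  ring

variable {f : E → ℝ} {L : ℝ} (hf : ∀ θ η, |f θ - f η| ≤ L * ‖θ - η‖)
include hf

lemma integrable_exp_neg_sub_sq_norm_sub {ρ : ℝ} (hρ : ρ ≠ 0) (θ : E) :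
    Integrable (fun z => exp (-f z - ‖z - θ‖ ^ 2 / (2 * ρ ^ 2))) μ := by
  have hfc := continuous_of_abs_sub_le_mul_norm hf
  refine (((integrable_exp_mul_norm_sub_sq_norm μ hρ L).comp_sub_right θ).const_mul
    (exp (-f θ))).mono' (by fun_prop) (.of_forall fun z => ?_)
  rw [norm_of_nonneg (exp_pos _).le]
  exact exp_neg_sub_le_exp_neg_mul (hf z θ) _

lemma exp_neg_mul_integral_le_gaussSmoothingIntegral {ρ : ℝ} (hρ : ρ ≠ 0) (θ : E) :
    exp (-f θ) * ∫ z, exp (-L * ‖z‖ - ‖z‖ ^ 2 / (2 * ρ ^ 2)) ∂μ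
      ≤ gaussSmoothingIntegral μ f ρ θ := by
  rw [← integral_sub_right_eq_self _ θ, ← integral_const_mul]
  exact integral_mono
    (((integrable_exp_mul_norm_sub_sq_norm μ hρ (-L)).comp_sub_right θ).const_mul _)
    (integrable_exp_neg_sub_sq_norm_sub μ hf hρ θ)
    fun z => by simpa only [neg_mul] using exp_neg_mul_exp_neg_sub_le (hf z θ) _

lemma gaussSmoothingIntegral_le_exp_neg_mul_integral {ρ : ℝ} (hρ : ρ ≠ 0) (θ : E) :
    gaussSmoothingIntegral μ f ρ θ
      ≤ exp (-f θ) * ∫ z, exp (L * ‖z‖ - ‖z‖ ^ 2 / (2 * ρ ^ 2)) ∂μ := by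
  rw [← integral_sub_right_eq_self _ θ, ← integral_const_mul]
  exact integral_mono (integrable_exp_neg_sub_sq_norm_sub μ hf hρ θ)
    (((integrable_exp_mul_norm_sub_sq_norm μ hρ L).comp_sub_right θ).const_mul _)
    fun z => exp_neg_sub_le_exp_neg_mul (hf z θ) _

lemma integrable_gaussSmoothingIntegral (hfi : Integrable (fun θ => exp (-f θ)) μ) {ρ : ℝ}
    (hρ : ρ ≠ 0) : Integrable (gaussSmoothingIntegral μ f ρ) μ := by
  have hfc := continuous_of_abs_sub_le_mul_norm hf
  have hmeas : AEStronglyMeasurable (gaussSmoothingIntegral μ f ρ) μ :=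
    (Continuous.stronglyMeasurable
      (f := fun p : E × E => exp (-f p.2 - ‖p.2 - p.1‖ ^ 2 / (2 * ρ ^ 2)))
      (by fun_prop)).integral_prod_right'.aestronglyMeasurable
  refine (hfi.mul_const (∫ z, exp (L * ‖z‖ - ‖z‖ ^ 2 / (2 * ρ ^ 2)) ∂μ)).mono' hmeas
    (.of_forall fun θ => ?_)
  exact (norm_of_nonneg (integral_nonneg fun z => (exp_pos _).le)).trans_le
    (gaussSmoothingIntegral_le_exp_neg_mul_integral μ hf hρ θ)

end GaussSmoothing

lemma half_integral_abs_gaussSmoothed_sub_nrmDensity_le {d : ℕ} (hd : 1 ≤ d) {L : ℝ}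
    {f : En d → ℝ} (hf : ∀ θ η : En d, |f θ - f η| ≤ L * ‖θ - η‖)
    (hfi : Integrable (fun θ : En d => exp (-f θ))) (hC : 0 < ∫ θ : En d, exp (-f θ))
    {ρ : ℝ} (hρ : 0 < ρ) :
    1 / 2 * ∫ θ : En d, |gaussSmoothed f ρ θ - nrmDensity f θ|
      ≤ 1 - pcf d (L * ρ) / pcf d (-(L * ρ)) := by
  have : Nonempty (Fin d) := ⟨⟨0, hd⟩⟩
  set K := fun c : ℝ => ∫ z : En d, exp (c * ‖z‖ - ‖z‖ ^ 2 / (2 * ρ ^ 2))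
  have hK : ∀ c, K c = d * (volume : Measure (En d)).real (Metric.ball 0 1) * ρ ^ d
      * gaussLaplace (d - 1) (-(c * ρ)) := fun c => by
    simpa only [finrank_euclideanSpace_fin] using
      integral_exp_mul_norm_sub_sq_norm (volume : Measure (En d)) hρ c
  have hA : 0 < d * (volume : Measure (En d)).real (Metric.ball 0 1) * ρ ^ d := by
    have : 0 < volume.real (Metric.ball (0 : En d) 1) :=
      ENNReal.toReal_pos (Metric.measure_ball_pos _ _ one_pos).ne' measure_ball_lt_top.ne
    positivity
  have hratio : K (-L) / K L = pcf d (L * ρ) / pcf d (-(L * ρ)) := by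
    rw [hK, hK, pcf_div_pcf_neg hd, neg_mul, neg_neg, mul_div_mul_left _ _ hA.ne']
  rw [← hratio]
  exact half_integral_abs_div_integral_sub_le hfi
    (integrable_gaussSmoothingIntegral volume hf hfi hρ.ne') (.of_forall fun θ => (exp_pos _).le)
    hC (by rw [hK]; exact mul_pos hA (gaussLaplace_pos _ _))
    (.of_forall (exp_neg_mul_integral_le_gaussSmoothingIntegral volume hf hρ.ne'))
    (.of_forall (gaussSmoothingIntegral_le_exp_neg_mul_integral volume hf hρ.ne'))

theorem statement7_general {d : ℕ} (hd : 1 ≤ d) (L : ℝ) :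
    Tendsto (fun ρ : ℝ => (1 - pcf d (L * ρ) / pcf d (-(L * ρ))) / ρ)
      (nhdsWithin 0 (Set.Ioi 0))
      (nhds (2 * Real.sqrt 2 * Real.Gamma (((d : ℝ) + 1) / 2) / Real.Gamma ((d : ℝ) / 2) * L)) ∧
    ∀ f : En d → ℝ, (∀ θ η : En d, |f θ - f η| ≤ L * ‖θ - η‖) →
      Integrable (fun θ : En d => Real.exp (-f θ)) →
      (0 < ∫ θ : En d, Real.exp (-f θ)) →
      ∃ e : ℝ → ℝ, e =o[nhdsWithin 0 (Set.Ioi 0)] (fun ρ => ρ) ∧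
        ∀ ρ : ℝ, 0 < ρ →
          (1 / 2) * (∫ θ : En d, |gaussSmoothed f ρ θ - nrmDensity f θ|) ≤
            ρ * L * (2 * Real.sqrt 2 * Real.Gamma (((d : ℝ) + 1) / 2) /
              Real.Gamma ((d : ℝ) / 2)) + e ρ := by
  set F := fun ρ : ℝ => 1 - pcf d (L * ρ) / pcf d (-(L * ρ))
  set C := 2 * √2 * Gamma (((d : ℝ) + 1) / 2) / Gamma ((d : ℝ) / 2)
  have hF : HasDerivAt F (C * L) 0 := hasDerivAt_one_sub_pcf_div hd L
  have hF0 : F 0 = 0 := by simp [F, div_self (pcf_pos hd _).ne']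
  refine ⟨?_, fun f hf hfi hC => ⟨fun ρ => F ρ - ρ * L * C, ?_, fun ρ hρ => ?_⟩⟩
  · show Tendsto (fun ρ => F ρ / ρ) _ _
    simpa only [zero_add, hF0, sub_zero, smul_eq_mul, inv_mul_eq_div] using
      hF.tendsto_slope_zero_right
  · refine (hF.isLittleO.mono nhdsWithin_le_nhds).congr (fun ρ => ?_) (fun ρ => sub_zero ρ)
    rw [hF0, smul_eq_mul]
    ring
  · linarith [half_integral_abs_gaussSmoothed_sub_nrmDensity_le hd hf hfi hC hρ]

/-- Small-`ρ` expansion of the Lipschitz-case total variation bound: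
`(1 − D_{−d}(Lρ)/D_{−d}(−Lρ))/ρ → 2√2 Γ((d+1)/2)/Γ(d/2) · L` as `ρ → 0⁺`; consequently, for
an `L`-Lipschitz potential `f`, `‖π_ρ − π‖_TV ≤ ρ L · 2√2 Γ((d+1)/2)/Γ(d/2) + o(ρ)`. -/
theorem statement7 {d : ℕ} (hd : 1 ≤ d) (L : ℝ) (hL : 0 ≤ L) :
    Tendsto (fun ρ : ℝ => (1 - pcf d (L * ρ) / pcf d (-(L * ρ))) / ρ)
      (nhdsWithin 0 (Set.Ioi 0))
      (nhds (2 * Real.sqrt 2 * Real.Gamma (((d : ℝ) + 1) / 2) / Real.Gamma ((d : ℝ) / 2) * L)) ∧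
    ∀ f : En d → ℝ, (∀ θ η : En d, |f θ - f η| ≤ L * ‖θ - η‖) →
      Integrable (fun θ : En d => Real.exp (-f θ)) →
      (0 < ∫ θ : En d, Real.exp (-f θ)) →
      ∃ e : ℝ → ℝ, e =o[nhdsWithin 0 (Set.Ioi 0)] (fun ρ => ρ) ∧
        ∀ ρ : ℝ, 0 < ρ →
          (1 / 2) * (∫ θ : En d, |gaussSmoothed f ρ θ - nrmDensity f θ|) ≤
            ρ * L * (2 * Real.sqrt 2 * Real.Gamma (((d : ℝ) + 1) / 2) /
              Real.Gamma ((d : ℝ) / 2)) + e ρ :=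
  statement7_general hd L
end
end

section
/- Let d ≥ 1 and let f : ℝ^d → ℝ be L_f-Lipschitz with C_π := ∫_{ℝ^d} exp(−f(θ)) dθ ∈ (0, ∞); let π := exp(−f)/C_π and let π_ρ be the Gaussian-smoothed density. Let α ∈ (0,1) and let C ⊆ ℝ^d be any measurable set with ∫_C π_ρ(θ) dθ = 1 − α. Then (1 − α) N_ρ / D_{−d}(−L_f ρ) ≤ ∫_C π(θ) dθ ≤ min(1, (1 − α) N_ρ / D_{−d}(L_f ρ)), where N_ρ := 2^{d/2−1} Γ(d/2) / (Γ(d) exp(L_f² ρ²/4)). -/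
open MeasureTheory

noncomputable section

/-!
The unnormalized smoothed density is the convolution of `e^{-f}` with the Gaussian kernel, so its
total mass is `C_π` times the Gaussian mass. Since `f` is `L`-Lipschitz, `e^{-f(θ - w)}` lies
between `e^{-f(θ) - L‖w‖}` and `e^{-f(θ) + L‖w‖}`, so the convolution is sandwiched between
`e^{-f(θ)}` times the masses of the tilted kernels `exp (∓L‖w‖ - ‖w‖²/(2ρ²))`; integrating over
`C` bounds the `π`-mass of `C`. In polar coordinates the tilted masses are, up to a common factor,
the integrals defining `D_{-d}(±Lρ)`, and the untilted one gives `N_ρ`.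
-/

open Real Set Module

def pcfIntegral (d : ℕ) (z : ℝ) : ℝ :=
  ∫ x in Ioi (0 : ℝ), exp (-(x * z) - x ^ 2 / 2) * x ^ (d - 1)

lemma pcf_eq_mul_pcfIntegral (d : ℕ) (z : ℝ) :
    pcf d z = exp (-z ^ 2 / 4) / Gamma d * pcfIntegral d z :=
  rfl

lemma pcfIntegral_zero {d : ℕ} (hd : 1 ≤ d) :
    pcfIntegral d 0 = 2 ^ ((d : ℝ) / 2 - 1) * Gamma ((d : ℝ) / 2) := by
  have hpow : ∀ x ∈ Ioi (0 : ℝ), exp (-(x * 0) - x ^ 2 / 2) * x ^ (d - 1)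
      = x ^ ((d : ℝ) - 1) * exp (-(1 / 2) * x ^ (2 : ℝ)) := by
    intro x hx
    rw [show (d : ℝ) - 1 = ((d - 1 : ℕ) : ℝ) by rw [Nat.cast_sub hd, Nat.cast_one],
      rpow_natCast, rpow_two]
    ring_nf
  have hd' : (1 : ℝ) ≤ d := by exact_mod_cast hd
  rw [pcfIntegral, setIntegral_congr_fun measurableSet_Ioi hpow,
    integral_rpow_mul_exp_neg_mul_rpow (by norm_num) (by linarith) (by norm_num),
    show ((d : ℝ) - 1 + 1) / 2 = d / 2 by ring, one_div, inv_rpow zero_le_two,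
    ← rpow_neg zero_le_two, ← rpow_neg_one 2, ← rpow_add two_pos]
  ring_nf

lemma div_pcf_eq_pcfIntegral_div {d : ℕ} (hd : 1 ≤ d) (z : ℝ) :
    2 ^ ((d : ℝ) / 2 - 1) * Gamma ((d : ℝ) / 2) / (Gamma d * exp (z ^ 2 / 4)) / pcf d z =
      pcfIntegral d 0 / pcfIntegral d z := by
  have hΓ : Gamma d * exp (z ^ 2 / 4) ≠ 0 :=
    mul_ne_zero (Gamma_pos_of_pos (by exact_mod_cast hd)).ne' (exp_pos _).ne'
  have hpcf : pcf d z = pcfIntegral d z / (Gamma d * exp (z ^ 2 / 4)) := by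
    rw [pcf_eq_mul_pcfIntegral, neg_div, exp_neg]
    field_simp
  rw [hpcf, ← pcfIntegral_zero hd, div_div_div_cancel_right₀ hΓ]

lemma integrableOn_pow_mul_exp_mul_sub_sq_div (n : ℕ) (c : ℝ) {ρ : ℝ} (hρ : ρ ≠ 0) :
    IntegrableOn (fun y : ℝ => y ^ n * exp (c * y - y ^ 2 / (2 * ρ ^ 2))) (Ioi 0) := by
  have hmaj : IntegrableOn
      (fun y : ℝ => exp (c ^ 2 * ρ ^ 2) * (y ^ (n : ℝ) * exp (-(1 / (4 * ρ ^ 2)) * y ^ 2)))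
      (Ioi 0) :=
    (integrableOn_rpow_mul_exp_neg_mul_sq (by positivity)
      (by linarith [n.cast_nonneg (α := ℝ)])).const_mul _
  refine hmaj.integrable.mono' (by fun_prop) ?_
  filter_upwards [ae_restrict_mem measurableSet_Ioi] with y (hy : 0 < y)
  -- AM-GM: `c y ≤ c² ρ² + y² / (4 ρ²)`
  have hexp : c * y - y ^ 2 / (2 * ρ ^ 2) ≤ c ^ 2 * ρ ^ 2 + -(1 / (4 * ρ ^ 2)) * y ^ 2 := by
    have hsq : c ^ 2 * ρ ^ 2 + -(1 / (4 * ρ ^ 2)) * y ^ 2 - (c * y - y ^ 2 / (2 * ρ ^ 2)) =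
        (c * ρ - y / (2 * ρ)) ^ 2 := by
      field_simp
      ring
    linarith [sq_nonneg (c * ρ - y / (2 * ρ))]
  rw [norm_mul, norm_pow, norm_of_nonneg hy.le, norm_of_nonneg (exp_pos _).le, rpow_natCast,
    mul_left_comm, ← exp_add]
  gcongr

lemma integral_pow_mul_exp_mul_sub_sq_div {d : ℕ} (hd : 1 ≤ d) {ρ : ℝ} (hρ : 0 < ρ) (s : ℝ) :
    ∫ y in Ioi (0 : ℝ), y ^ (d - 1) * exp (s * y - y ^ 2 / (2 * ρ ^ 2)) =
      ρ ^ d * pcfIntegral d (-(s * ρ)) := by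
  obtain ⟨k, rfl⟩ : ∃ k, d = k + 1 := ⟨d - 1, by omega⟩
  have h := integral_comp_mul_left_Ioi'
    (fun y : ℝ => y ^ k * exp (s * y - y ^ 2 / (2 * ρ ^ 2))) 0 hρ
  rw [mul_zero] at h
  simp only [Nat.add_sub_cancel]
  rw [← h, smul_eq_mul, pcfIntegral, ← integral_const_mul, ← integral_const_mul]
  refine setIntegral_congr_fun measurableSet_Ioi fun x _ => ?_
  have hsq : (ρ * x) ^ 2 / (2 * ρ ^ 2) = x ^ 2 / 2 := by field_simp
  simp only [Nat.add_sub_cancel]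
  rw [hsq, show s * (ρ * x) - x ^ 2 / 2 = -(x * -(s * ρ)) - x ^ 2 / 2 by ring]
  ring

section TiltedGauss

open scoped Convolution
open ContinuousLinearMap

variable {E : Type*} [NormedAddCommGroup E]

def tiltedGauss (ρ s : ℝ) (w : E) : ℝ :=
  exp (s * ‖w‖ - ‖w‖ ^ 2 / (2 * ρ ^ 2))

lemma integral_exp_neg_sub_sq_eq_convolution [MeasurableSpace E] (μ : Measure E) (f : E → ℝ)
    (ρ : ℝ) (θ : E) :
    ∫ z, exp (-f z - ‖z - θ‖ ^ 2 / (2 * ρ ^ 2)) ∂μ =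
      ((fun z => exp (-f z)) ⋆[lsmul ℝ ℝ, μ] tiltedGauss ρ 0) θ := by
  rw [convolution_def]
  refine integral_congr_ae (.of_forall fun z => ?_)
  simp only [tiltedGauss, lsmul_apply, smul_eq_mul, ← exp_add, norm_sub_rev θ z, zero_mul]
  ring_nf

section Lipschitz

variable {f : E → ℝ} {L : ℝ} (hLip : ∀ θ η, |f θ - f η| ≤ L * ‖θ - η‖)
include hLip

lemma exp_neg_mul_tiltedGauss_neg_le (ρ : ℝ) (θ t : E) :
    exp (-f θ) * tiltedGauss ρ (-L) (θ - t) ≤ exp (-f t) * tiltedGauss ρ 0 (θ - t) := by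
  have h := (abs_le.1 (hLip t θ)).2
  rw [norm_sub_rev] at h
  simp only [tiltedGauss, ← exp_add]
  exact exp_le_exp.2 (by linarith)

lemma exp_neg_mul_tiltedGauss_zero_le (ρ : ℝ) (θ t : E) :
    exp (-f t) * tiltedGauss ρ 0 (θ - t) ≤ exp (-f θ) * tiltedGauss ρ L (θ - t) := by
  have h := (abs_le.1 (hLip t θ)).1
  rw [norm_sub_rev] at h
  simp only [tiltedGauss, ← exp_add]
  exact exp_le_exp.2 (by linarith)

end Lipschitz

variable [NormedSpace ℝ E] [FiniteDimensional ℝ E] [MeasurableSpace E] [BorelSpace E]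
  [Nontrivial E] (μ : Measure E) [μ.IsAddHaarMeasure] {ρ : ℝ}

lemma integrable_tiltedGauss (hρ : ρ ≠ 0) (s : ℝ) : Integrable (tiltedGauss ρ s) μ :=
  (integrable_fun_norm_addHaar μ (f := fun y => exp (s * y - y ^ 2 / (2 * ρ ^ 2)))).2
    (integrableOn_pow_mul_exp_mul_sub_sq_div _ s hρ)

lemma integral_tiltedGauss_pos (hρ : ρ ≠ 0) (s : ℝ) : 0 < ∫ w, tiltedGauss ρ s w ∂μ :=
  integral_exp_pos (integrable_tiltedGauss μ hρ s)

lemma integral_tiltedGauss (hρ : 0 < ρ) (s : ℝ) :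
    ∫ w, tiltedGauss ρ s w ∂μ = finrank ℝ E * μ.real (Metric.ball 0 1) *
      (ρ ^ finrank ℝ E * pcfIntegral (finrank ℝ E) (-(s * ρ))) := by
  rw [← integral_pow_mul_exp_mul_sub_sq_div finrank_pos hρ]
  simpa only [tiltedGauss, nsmul_eq_mul, smul_eq_mul, mul_assoc] using
    integral_fun_norm_addHaar μ (fun y => exp (s * y - y ^ 2 / (2 * ρ ^ 2)))

lemma integral_tiltedGauss_zero_div (hρ : 0 < ρ) (s : ℝ) :
    (∫ w, tiltedGauss ρ 0 w ∂μ) / ∫ w, tiltedGauss ρ s w ∂μ =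
      pcfIntegral (finrank ℝ E) 0 / pcfIntegral (finrank ℝ E) (-(s * ρ)) := by
  have hball : 0 < μ.real (Metric.ball 0 1) :=
    ENNReal.toReal_pos (Metric.measure_ball_pos μ 0 one_pos).ne' measure_ball_lt_top.ne
  have hκ : (finrank ℝ E : ℝ) * μ.real (Metric.ball 0 1) * ρ ^ finrank ℝ E ≠ 0 := by
    have : (0 : ℝ) < finrank ℝ E := by exact_mod_cast finrank_pos
    positivity
  rw [integral_tiltedGauss μ hρ, integral_tiltedGauss μ hρ, ← mul_assoc, ← mul_assoc,
    mul_div_mul_left _ _ hκ, zero_mul, neg_zero]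

variable {f : E → ℝ} {L : ℝ} (hLip : ∀ θ η, |f θ - f η| ≤ L * ‖θ - η‖)
include hLip

lemma integrable_exp_neg_mul_tiltedGauss_sub (hρ : ρ ≠ 0) (θ : E) :
    Integrable (fun t => exp (-f t) * tiltedGauss ρ 0 (θ - t)) μ := by
  have hf : Continuous f := (LipschitzWith.of_dist_le' (K := L) fun x y => by
    rw [Real.dist_eq, dist_eq_norm]
    exact hLip x y).continuous
  refine (((integrable_tiltedGauss μ hρ L).comp_sub_left θ).const_mul (exp (-f θ))).mono'
    (by unfold tiltedGauss; fun_prop) (.of_forall fun t => ?_)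
  rw [norm_of_nonneg (by unfold tiltedGauss; positivity)]
  exact exp_neg_mul_tiltedGauss_zero_le hLip ρ θ t

lemma exp_neg_mul_integral_tiltedGauss_le_convolution (hρ : ρ ≠ 0) (θ : E) :
    exp (-f θ) * ∫ w, tiltedGauss ρ (-L) w ∂μ ≤
      ((fun z => exp (-f z)) ⋆[lsmul ℝ ℝ, μ] tiltedGauss ρ 0) θ := by
  simp only [convolution_def, lsmul_apply, smul_eq_mul]
  rw [← integral_sub_left_eq_self (tiltedGauss ρ (-L)) μ θ, ← integral_const_mul]
  exact integral_mono (((integrable_tiltedGauss μ hρ _).comp_sub_left θ).const_mul _)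
    (integrable_exp_neg_mul_tiltedGauss_sub μ hLip hρ θ) (exp_neg_mul_tiltedGauss_neg_le hLip ρ θ)

lemma convolution_le_exp_neg_mul_integral_tiltedGauss (hρ : ρ ≠ 0) (θ : E) :
    ((fun z => exp (-f z)) ⋆[lsmul ℝ ℝ, μ] tiltedGauss ρ 0) θ ≤
      exp (-f θ) * ∫ w, tiltedGauss ρ L w ∂μ := by
  simp only [convolution_def, lsmul_apply, smul_eq_mul]
  rw [← integral_sub_left_eq_self (tiltedGauss ρ L) μ θ, ← integral_const_mul]
  exact integral_mono (integrable_exp_neg_mul_tiltedGauss_sub μ hLip hρ θ)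
    (((integrable_tiltedGauss μ hρ _).comp_sub_left θ).const_mul _)
    (exp_neg_mul_tiltedGauss_zero_le hLip ρ θ)

end TiltedGauss

lemma setIntegral_div_integral_bounds_of_le_of_le {α : Type*} [MeasurableSpace α]
    {μ : Measure α} {p g : α → ℝ} {a b m β : ℝ} (s : Set α) (ha : 0 < a) (hb : 0 < b)
    (hm : 0 < m) (hp : Integrable p μ) (hg : Integrable g μ) (hlow : ∀ x, p x * a ≤ g x)
    (hup : ∀ x, g x ≤ p x * b) (hpos : 0 < ∫ x, p x ∂μ)
    (hmass : ∫ x, g x ∂μ = (∫ x, p x ∂μ) * m)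
    (hs : ∫ x in s, g x / ∫ y, g y ∂μ ∂μ = β) :
    β * m / b ≤ ∫ x in s, p x / ∫ y, p y ∂μ ∂μ ∧ ∫ x in s, p x / ∫ y, p y ∂μ ∂μ ≤ β * m / a := by
  rw [integral_div, hmass, div_eq_iff (by positivity)] at hs
  have hlow' : (∫ x in s, p x ∂μ) * a ≤ ∫ x in s, g x ∂μ := by
    rw [← integral_mul_const]
    exact setIntegral_mono (hp.mul_const a).integrableOn hg.integrableOn hlow
  have hup' : ∫ x in s, g x ∂μ ≤ (∫ x in s, p x ∂μ) * b := by
    rw [← integral_mul_const]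
    exact setIntegral_mono hg.integrableOn (hp.mul_const b).integrableOn hup
  rw [integral_div, div_le_div_iff₀ hb hpos, div_le_div_iff₀ hpos ha]
  constructor <;> linarith

theorem statement12_general {d : ℕ} (hd : 1 ≤ d) (f : En d → ℝ) (L : ℝ)
    (hLip : ∀ θ η : En d, |f θ - f η| ≤ L * ‖θ - η‖)
    (hint : Integrable (fun θ : En d => Real.exp (-f θ)))
    (hpos : 0 < ∫ θ : En d, Real.exp (-f θ))
    (ρ : ℝ) (hρ : 0 < ρ)
    (N : ℝ) (hN : N = 2 ^ ((d : ℝ) / 2 - 1) * Real.Gamma ((d : ℝ) / 2) /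
      (Real.Gamma d * Real.exp (L ^ 2 * ρ ^ 2 / 4)))
    (α : ℝ)
    (Cset : Set (En d))
    (hcred : (∫ θ in Cset, gaussSmoothed f ρ θ) = 1 - α) :
    (1 - α) * N / pcf d (-(L * ρ)) ≤ (∫ θ in Cset, nrmDensity f θ) ∧
      (∫ θ in Cset, nrmDensity f θ) ≤ min 1 ((1 - α) * N / pcf d (L * ρ)) := by
  have : Nontrivial (En d) := nontrivial_of_finrank_pos (by rw [finrank_euclideanSpace_fin]; omega)
  have hI := integral_tiltedGauss_pos (volume : Measure (En d)) hρ.ne'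
  have hk := integrable_tiltedGauss (volume : Measure (En d)) hρ.ne' 0
  simp only [gaussSmoothed, integral_exp_neg_sub_sq_eq_convolution] at hcred
  obtain ⟨hlow, hup⟩ := setIntegral_div_integral_bounds_of_le_of_le Cset (hI (-L)) (hI L) (hI 0)
    hint (hint.integrable_convolution _ hk)
    (exp_neg_mul_integral_tiltedGauss_le_convolution _ hLip hρ.ne')
    (convolution_le_exp_neg_mul_integral_tiltedGauss _ hLip hρ.ne') hpos
    (integral_convolution _ hint hk) hcred
  have hN_low : N / pcf d (-(L * ρ)) =
      (∫ w : En d, tiltedGauss ρ 0 w) / ∫ w : En d, tiltedGauss ρ L w := by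
    rw [hN, integral_tiltedGauss_zero_div _ hρ, finrank_euclideanSpace_fin,
      ← div_pcf_eq_pcfIntegral_div hd, neg_sq, mul_pow]
  have hN_up : N / pcf d (L * ρ) =
      (∫ w : En d, tiltedGauss ρ 0 w) / ∫ w : En d, tiltedGauss ρ (-L) w := by
    rw [hN, integral_tiltedGauss_zero_div _ hρ, finrank_euclideanSpace_fin, neg_mul, neg_neg,
      ← div_pcf_eq_pcfIntegral_div hd, mul_pow]
  refine ⟨?_, le_min ?_ ?_⟩
  · rw [mul_div_assoc, hN_low, ← mul_div_assoc]
    exact hlow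
  · calc ∫ θ in Cset, nrmDensity f θ ≤ ∫ θ, nrmDensity f θ :=
          setIntegral_le_integral (hint.div_const _)
            (.of_forall fun θ => div_nonneg (exp_pos _).le hpos.le)
      _ = 1 := by rw [← div_self hpos.ne', ← integral_div]; rfl
  · rw [mul_div_assoc, hN_up, ← mul_div_assoc]
    exact hup

/-- Credibility regions: for an `L`-Lipschitz potential `f` with `C_π ∈ (0,∞)` and any
measurable set `Cset` with `π_ρ`-mass `1 − α`, the `π`-mass of `Cset` is sandwiched between
`(1−α) N_ρ / D_{−d}(−Lρ)` and `min(1, (1−α) N_ρ / D_{−d}(Lρ))`. -/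
theorem statement12 {d : ℕ} (hd : 1 ≤ d) (f : En d → ℝ) (L : ℝ)
    (hLip : ∀ θ η : En d, |f θ - f η| ≤ L * ‖θ - η‖)
    (hint : Integrable (fun θ : En d => Real.exp (-f θ)))
    (hpos : 0 < ∫ θ : En d, Real.exp (-f θ))
    (ρ : ℝ) (hρ : 0 < ρ)
    (N : ℝ) (hN : N = 2 ^ ((d : ℝ) / 2 - 1) * Real.Gamma ((d : ℝ) / 2) /
      (Real.Gamma d * Real.exp (L ^ 2 * ρ ^ 2 / 4)))
    (α : ℝ) (hα : α ∈ Set.Ioo (0 : ℝ) 1)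
    (Cset : Set (En d)) (hCset : MeasurableSet Cset)
    (hcred : (∫ θ in Cset, gaussSmoothed f ρ θ) = 1 - α) :
    (1 - α) * N / pcf d (-(L * ρ)) ≤ (∫ θ in Cset, nrmDensity f θ) ∧
      (∫ θ in Cset, nrmDensity f θ) ≤ min 1 ((1 - α) * N / pcf d (L * ρ)) :=
  statement12_general hd f L hLip hint hpos ρ hρ N hN α Cset hcred
end
end

section
/- Let d ≥ 1, ρ > 0, and let f : ℝ^d → ℝ be L-Lipschitz. Then for every θ ∈ ℝ^d, ∫_{ℝ^d} exp(f(θ) − f(z) − ‖θ − z‖₂²/(2ρ²)) dz ≤ A(ρ), where A(ρ) := (2 π^{d/2} ρ^d Γ(d) exp(L² ρ²/4) / Γ(d/2)) · D_{−d}(−Lρ). -/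
open MeasureTheory

noncomputable section

/-!
By the Lipschitz bound `f θ - f z ≤ L ‖θ - z‖`, the integrand is dominated by the radial function
`exp (L r - r² / (2ρ²))` of `r = ‖θ - z‖`. Integrating in polar coordinates, the volume of the unit
ball contributes `π^{d/2} / Γ(d/2 + 1)`, and the substitution `r = ρ x` turns the radial integral
into `ρ^d` times the integral defining `D_{-d}(-Lρ)`.
-/

open Real Set Module

section InnerProductSpace

variable {V : Type*} [NormedAddCommGroup V] [InnerProductSpace ℝ V] [FiniteDimensional ℝ V]
  [MeasurableSpace V] [BorelSpace V]

lemma integrable_exp_neg_mul_sq_norm {b : ℝ} (hb : 0 < b) :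
    Integrable (fun x : V => exp (-b * ‖x‖ ^ 2)) := by
  refine (GaussianFourier.integrable_cexp_neg_mul_sq_norm_add (V := V)
    (b := (b : ℂ)) (by simpa using hb) 0 0).norm.congr (Filter.Eventually.of_forall fun x => ?_)
  simp [Complex.norm_exp, ← Complex.ofReal_pow]

lemma integrable_exp_mul_norm_sub_sq_norm_div (L : ℝ) {ρ : ℝ} (hρ : 0 < ρ) :
    Integrable (fun x : V => exp (L * ‖x‖ - ‖x‖ ^ 2 / (2 * ρ ^ 2))) := by
  refine ((integrable_exp_neg_mul_sq_norm (V := V) (b := 1 / (4 * ρ ^ 2)) (by positivity)).const_mul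
    (exp (L ^ 2 * ρ ^ 2))).mono' (by fun_prop) (Filter.Eventually.of_forall fun x => ?_)
  rw [norm_of_nonneg (exp_pos _).le, ← exp_add, exp_le_exp]
  have hsq : L ^ 2 * ρ ^ 2 + -(1 / (4 * ρ ^ 2)) * ‖x‖ ^ 2 - (L * ‖x‖ - ‖x‖ ^ 2 / (2 * ρ ^ 2)) =
      (2 * ρ ^ 2 * L - ‖x‖) ^ 2 / (4 * ρ ^ 2) := by
    field_simp
    ring
  linarith [div_nonneg (sq_nonneg (2 * ρ ^ 2 * L - ‖x‖)) (by positivity : (0 : ℝ) ≤ 4 * ρ ^ 2)]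

lemma integral_exp_sub_sub_le_of_lipschitz (f : V → ℝ) (L : ℝ)
    (hLip : ∀ θ η : V, |f θ - f η| ≤ L * ‖θ - η‖) {ρ : ℝ} (hρ : 0 < ρ) (θ : V) :
    ∫ z, exp (f θ - f z - ‖θ - z‖ ^ 2 / (2 * ρ ^ 2)) ≤
      ∫ x : V, exp (L * ‖x‖ - ‖x‖ ^ 2 / (2 * ρ ^ 2)) := by
  set g : V → ℝ := fun x => exp (L * ‖x‖ - ‖x‖ ^ 2 / (2 * ρ ^ 2))
  have hg : Integrable g := integrable_exp_mul_norm_sub_sq_norm_div L hρ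
  have hg_shift : Integrable fun z => g (θ - z) :=
    ((Measure.measurePreserving_sub_left volume θ).integrable_comp hg.aestronglyMeasurable).mpr hg
  calc ∫ z, exp (f θ - f z - ‖θ - z‖ ^ 2 / (2 * ρ ^ 2))
      ≤ ∫ z, g (θ - z) :=
        integral_mono_of_nonneg (Filter.Eventually.of_forall fun _ => (exp_pos _).le) hg_shift
          (Filter.Eventually.of_forall fun z => exp_le_exp.2 (by
            linarith [(le_abs_self (f θ - f z)).trans (hLip θ z)]))
    _ = ∫ x, g x := integral_sub_left_eq_self g volume θ

lemma volumeReal_unit_ball [Nontrivial V] :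
    volume.real (Metric.ball (0 : V) 1) = π ^ ((finrank ℝ V : ℝ) / 2) /
      Gamma ((finrank ℝ V : ℝ) / 2 + 1) := by
  rw [measureReal_def, InnerProductSpace.volume_ball, ENNReal.ofReal_one, one_pow, one_mul,
    ENNReal.toReal_ofReal (by positivity), sqrt_eq_rpow, ← rpow_natCast, ← rpow_mul pi_pos.le]
  ring_nf

lemma integral_fun_norm_eq_mul_integral_Ioi [Nontrivial V] (g : ℝ → ℝ) :
    ∫ x : V, g ‖x‖ = finrank ℝ V * (π ^ ((finrank ℝ V : ℝ) / 2) /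
      Gamma ((finrank ℝ V : ℝ) / 2 + 1)) * ∫ r in Ioi 0, r ^ (finrank ℝ V - 1) * g r := by
  rw [integral_fun_norm_addHaar, volumeReal_unit_ball, nsmul_eq_mul, smul_eq_mul]
  simp only [smul_eq_mul, mul_assoc]

end InnerProductSpace

lemma integral_Ioi_pow_mul_exp_mul_sub_sq_div (n : ℕ) (L : ℝ) {ρ : ℝ} (hρ : 0 < ρ) :
    ∫ r in Ioi 0, r ^ n * exp (L * r - r ^ 2 / (2 * ρ ^ 2)) =
      ρ ^ (n + 1) * ∫ x in Ioi 0, exp (-(x * -(L * ρ)) - x ^ 2 / 2) * x ^ n := by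
  have hscale := integral_comp_mul_left_Ioi'
    (fun r => r ^ n * exp (L * r - r ^ 2 / (2 * ρ ^ 2))) 0 hρ
  rw [mul_zero, smul_eq_mul] at hscale
  rw [← hscale, pow_succ' ρ n, mul_assoc, ← integral_const_mul (ρ ^ n)]
  refine congrArg (ρ * ·) (setIntegral_congr_fun measurableSet_Ioi fun x _ => ?_)
  have hexp : L * (ρ * x) - (ρ * x) ^ 2 / (2 * ρ ^ 2) = -(x * -(L * ρ)) - x ^ 2 / 2 := by
    field_simp
  rw [hexp, mul_pow]
  ring

/-- Upper bound on the smoothing integral: for an `L`-Lipschitz `f`,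
`∫ exp(f(θ) − f(z) − ‖θ−z‖²/(2ρ²)) dz ≤ A(ρ)` where
`A(ρ) = (2 π^{d/2} ρ^d Γ(d) exp(L²ρ²/4)/Γ(d/2)) D_{−d}(−Lρ)`. -/
theorem statement13 {d : ℕ} (hd : 1 ≤ d) (ρ : ℝ) (hρ : 0 < ρ) (f : En d → ℝ) (L : ℝ)
    (hLip : ∀ θ η : En d, |f θ - f η| ≤ L * ‖θ - η‖) (θ : En d) :
    (∫ z : En d, Real.exp (f θ - f z - ‖θ - z‖ ^ 2 / (2 * ρ ^ 2))) ≤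
      2 * Real.pi ^ ((d : ℝ) / 2) * ρ ^ d * Real.Gamma d * Real.exp (L ^ 2 * ρ ^ 2 / 4) /
        Real.Gamma ((d : ℝ) / 2) * pcf d (-(L * ρ)) := by
  have : NeZero d := ⟨by omega⟩
  have hd0 : (0 : ℝ) < d := by exact_mod_cast hd
  have hΓ : Gamma (d : ℝ) ≠ 0 := (Gamma_pos_of_pos hd0).ne'
  have hΓhalf : Gamma ((d : ℝ) / 2) ≠ 0 := (Gamma_pos_of_pos (by positivity)).ne'
  have hexp : exp (-(-(L * ρ)) ^ 2 / 4) = (exp (L ^ 2 * ρ ^ 2 / 4))⁻¹ := by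
    rw [← exp_neg]; ring_nf
  calc ∫ z, exp (f θ - f z - ‖θ - z‖ ^ 2 / (2 * ρ ^ 2))
      ≤ ∫ x : En d, exp (L * ‖x‖ - ‖x‖ ^ 2 / (2 * ρ ^ 2)) :=
        integral_exp_sub_sub_le_of_lipschitz f L hLip hρ θ
    _ = d * (π ^ ((d : ℝ) / 2) / Gamma ((d : ℝ) / 2 + 1)) *
          (ρ ^ d * ∫ x in Ioi 0, exp (-(x * -(L * ρ)) - x ^ 2 / 2) * x ^ (d - 1)) := by
        rw [integral_fun_norm_eq_mul_integral_Ioi (fun r => exp (L * r - r ^ 2 / (2 * ρ ^ 2))),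
          integral_Ioi_pow_mul_exp_mul_sub_sq_div _ L hρ, finrank_euclideanSpace_fin,
          Nat.sub_add_cancel hd]
    _ = _ := by
        rw [pcf, Gamma_add_one (by positivity), hexp]
        generalize ∫ x in Ioi 0, exp (-(x * -(L * ρ)) - x ^ 2 / 2) * x ^ (d - 1) = I
        field_simp
end
end
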